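/- For a generator ∂ and any μ ∈ N, the support of ∂μ equals the set of points x in the support of μ such that ∂(μ − δ_x) ≠ ∂μ. -/

import Mathlib

/-- The Dirac counting measure at a point, in the model of counting measures
on `X` as functions `X → ℕ` (pointwise order and addition). -/
noncomputable def delta {X : Type*} (x : X) : X → ℕ := Set.indicator {x} 1

/-- A generator: a map on counting measures satisfying (H1) thinning, (H2) additivity,
(H3) idempotency and (H4) consistency. -/
def IsGenerator {X : Type*} (D : (X → ℕ) → (X → ℕ)) : Prop :=
  (∀ μ, D μ ≤ μ) ∧
  (∀ μ x, D μ x ≠ 0 → D (μ + delta x) = D μ + delta x) ∧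
  (∀ μ μ' : X → ℕ, μ' ≤ μ - D μ → D (D μ + μ') = D μ) ∧
  (∀ μ μ' ψ : X → ℕ, μ' ≤ μ → D μ = D μ' → D (μ + ψ) = D (μ' + ψ))

/-- The hull operator associated with a generator. -/
def hull {X : Type*} (D : (X → ℕ) → (X → ℕ)) (μ : X → ℕ) : Set X :=
  {x | D (μ + delta x) = D μ}

open scoped Classical

/-- The indicator `H_x(μ) = 1{∂(μ + δ_x) ≠ ∂μ}`, as a real number. -/
noncomputable def Hf {X : Type*} (D : (X → ℕ) → (X → ℕ)) (x : X) (μ : X → ℕ) : ℝ :=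
  if D (μ + delta x) = D μ then 0 else 1

/-!
A point `x` with `∂μ x ≠ 0` cannot be removed without changing `∂μ`: by consistency (H4),
`∂(μ - δ_x) = ∂μ` would force `∂(μ + δ_x) = ∂μ`, whereas additivity (H2) adds `δ_x`.
Conversely, if `∂μ x = 0` then `∂μ ≤ μ - δ_x ≤ μ`, and idempotency (H3) shows that `∂` is
constant on every measure squeezed between `∂μ` and `μ`.
-/

section

variable {X : Type*}

theorem delta_self (x : X) : delta x x = 1 := by
  simp [delta]

theorem delta_of_ne {x y : X} (h : y ≠ x) : delta x y = 0 := by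
  simp [delta, h]

theorem delta_le_of_ne_zero {μ : X → ℕ} {x : X} (hx : μ x ≠ 0) : delta x ≤ μ := by
  intro y
  by_cases hy : y = x
  · subst hy
    rw [delta_self]
    exact Nat.one_le_iff_ne_zero.mpr hx
  · simp [delta_of_ne hy]

theorem le_sub_delta_of_eq_zero {ν μ : X → ℕ} {x : X} (hle : ν ≤ μ) (hx : ν x = 0) :
    ν ≤ μ - delta x := by
  intro y
  by_cases hy : y = x
  · subst hy
    simp [hx]
  · simpa [delta_of_ne hy] using hle y

namespace IsGenerator

variable {D : (X → ℕ) → (X → ℕ)}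

theorem apply_le (hD : IsGenerator D) (μ : X → ℕ) : D μ ≤ μ :=
  hD.1 μ

theorem apply_add_delta (hD : IsGenerator D) {μ : X → ℕ} {x : X} (hx : D μ x ≠ 0) :
    D (μ + delta x) = D μ + delta x :=
  hD.2.1 μ x hx

theorem apply_apply_add (hD : IsGenerator D) {μ μ' : X → ℕ} (h : μ' ≤ μ - D μ) :
    D (D μ + μ') = D μ :=
  hD.2.2.1 μ μ' h

theorem apply_add_congr (hD : IsGenerator D) {μ μ' : X → ℕ} (hle : μ' ≤ μ)
    (heq : D μ = D μ') (ψ : X → ℕ) : D (μ + ψ) = D (μ' + ψ) :=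
  hD.2.2.2 μ μ' ψ hle heq

theorem ne_zero_of_apply_ne_zero (hD : IsGenerator D) {μ : X → ℕ} {x : X}
    (hx : D μ x ≠ 0) : μ x ≠ 0 :=
  ((Nat.pos_of_ne_zero hx).trans_le (hD.apply_le μ x)).ne'

theorem apply_eq_of_le_of_le (hD : IsGenerator D) {μ ν : X → ℕ} (hlow : D μ ≤ ν)
    (hup : ν ≤ μ) : D ν = D μ := by
  rw [← add_tsub_cancel_of_le hlow]
  exact hD.apply_apply_add (tsub_le_tsub_right hup _)

theorem apply_add_delta_ne (hD : IsGenerator D) {μ : X → ℕ} {x : X} (hx : D μ x ≠ 0) :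
    D (μ + delta x) ≠ D μ := by
  intro heq
  have hadd := congrFun (hD.apply_add_delta hx) x
  rw [heq, Pi.add_apply, delta_self] at hadd
  omega

theorem apply_sub_delta_ne (hD : IsGenerator D) {μ : X → ℕ} {x : X} (hx : D μ x ≠ 0) :
    D (μ - delta x) ≠ D μ := by
  intro heq
  apply hD.apply_add_delta_ne hx
  have hcons := hD.apply_add_congr tsub_le_self heq.symm (delta x)
  rwa [tsub_add_cancel_of_le (delta_le_of_ne_zero (hD.ne_zero_of_apply_ne_zero hx))] at hcons

theorem apply_sub_delta_eq (hD : IsGenerator D) {μ : X → ℕ} {x : X} (hx : D μ x = 0) :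
    D (μ - delta x) = D μ :=
  hD.apply_eq_of_le_of_le (le_sub_delta_of_eq_zero (hD.apply_le μ) hx) tsub_le_self

end IsGenerator

end

/-- For a generator `D` and any `μ`, the support of `D μ` equals the set of
points `x` in the support of `μ` with `D (μ − δ_x) ≠ D μ`. -/
theorem support_generator {X : Type*} (D : (X → ℕ) → (X → ℕ))
    (hD : IsGenerator D) (μ : X → ℕ) :
    {x | D μ x ≠ 0} = {x | μ x ≠ 0 ∧ D (μ - delta x) ≠ D μ} := by
  ext x
  constructor
  · intro hx
    exact ⟨hD.ne_zero_of_apply_ne_zero hx, hD.apply_sub_delta_ne hx⟩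
  · rintro ⟨-, hne⟩ hx
    exact hne (hD.apply_sub_delta_eq hx)
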